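/- For p⁺ > 0 and p⁻ ∈ ℝ, the sesquilinear form on V₊^{p⁺,p⁻} determined by ⟨|r⟩, |s⟩⟩ = (2p⁺)^r · r! · δ_{r,s} is a positive definite Hermitian inner product and satisfies the contravariance relations ⟨ρ(J⁺)u, v⟩ = −⟨u, ρ(J⁻)v⟩, ⟨ρ(J⁻)u, v⟩ = −⟨u, ρ(J⁺)v⟩, ⟨ρ(J)u, v⟩ = −⟨u, ρ(J)v⟩, and ⟨ρ(T)u, v⟩ = −⟨u, ρ(T)v⟩ for all u, v ∈ V₊^{p⁺,p⁻}; i.e. V₊^{p⁺,p⁻} is a unitary representation of 𝔫𝔴. -/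

import Mathlib

/-!
For `p⁺, p⁻ ∈ ℝ`, `V₊^{p⁺,p⁻}` is the complex vector space with basis
`{|r⟩ : r ∈ ℕ}` (modelled as `ℕ →₀ ℂ`, `|r⟩ = single r 1`) with operators
`ρ(T)|r⟩ = ip⁺|r⟩`, `ρ(J)|r⟩ = i(p⁻ − r)|r⟩`, `ρ(J⁻)|r⟩ = i|r+1⟩`,
`ρ(J⁺)|r⟩ = 2ip⁺r|r−1⟩` (so `ρ(J⁺)|0⟩ = 0`), and the sesquilinear form
determined by `⟨|r⟩, |s⟩⟩ = (2p⁺)^r · r! · δ_{r,s}`.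
-/

/-- The basis vector `|r⟩` of `V₊^{p⁺,p⁻}`. -/
noncomputable def ket (r : ℕ) : ℕ →₀ ℂ := Finsupp.single r 1

/-- Linear extension of a map defined on the basis `{|r⟩}`. -/
noncomputable def opOf (g : ℕ → (ℕ →₀ ℂ)) : (ℕ →₀ ℂ) →ₗ[ℂ] (ℕ →₀ ℂ) :=
  Finsupp.lsum ℂ fun r => LinearMap.toSpanSingleton ℂ (ℕ →₀ ℂ) (g r)

/-- `ρ(T)`. -/
noncomputable def rhoT (pp : ℝ) : (ℕ →₀ ℂ) →ₗ[ℂ] (ℕ →₀ ℂ) :=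
  opOf fun r => (Complex.I * (pp : ℂ)) • ket r

/-- `ρ(J)`. -/
noncomputable def rhoJ (pm : ℝ) : (ℕ →₀ ℂ) →ₗ[ℂ] (ℕ →₀ ℂ) :=
  opOf fun r => (Complex.I * ((pm : ℂ) - (r : ℂ))) • ket r

/-- `ρ(J⁻)`. -/
noncomputable def rhoJminus : (ℕ →₀ ℂ) →ₗ[ℂ] (ℕ →₀ ℂ) :=
  opOf fun r => Complex.I • ket (r + 1)

/-- `ρ(J⁺)`. -/
noncomputable def rhoJplus (pp : ℝ) : (ℕ →₀ ℂ) →ₗ[ℂ] (ℕ →₀ ℂ) :=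
  opOf fun r => (2 * Complex.I * (pp : ℂ) * (r : ℂ)) • ket (r - 1)

/-- The sesquilinear form on `V₊^{p⁺,p⁻}` determined by
`⟨|r⟩, |s⟩⟩ = (2p⁺)^r · r! · δ_{r,s}` (conjugate-linear in the first argument). -/
noncomputable def form (pp : ℝ) (u v : ℕ →₀ ℂ) : ℂ :=
  u.sum fun r a => (starRingEnd ℂ) a * v r * ((2 * pp : ℝ) : ℂ) ^ r * (r.factorial : ℂ)

/-!
The form is diagonal in the basis `|r⟩`, with real weights `w r = (2p⁺)^r · r!` that are positive
for `p⁺ > 0`; hence it is Hermitian and positive definite. Being sesquilinear, it is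
contravariant for a pair of operators as soon as this holds on basis vectors. `ρ(J)` and `ρ(T)`
are diagonal with imaginary eigenvalues, hence skew. For `J⁺` the check on `⟨|r+1⟩, |r+1⟩⟩`
is the recursion `w (r + 1) = 2p⁺(r + 1) · w r`, and the `J⁻` relation is the complex conjugate
of the `J⁺` one.
-/

noncomputable def weight (pp : ℝ) (r : ℕ) : ℝ := (2 * pp) ^ r * r.factorial

lemma weight_succ (pp : ℝ) (r : ℕ) : weight pp (r + 1) = 2 * pp * (r + 1) * weight pp r := by
  simp only [weight, pow_succ, Nat.factorial_succ, Nat.cast_mul, Nat.cast_succ]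
  ring

lemma weight_pos {pp : ℝ} (hpp : 0 < pp) (r : ℕ) : 0 < weight pp r := by
  unfold weight
  have := r.factorial_pos
  positivity

lemma form_eq_sum (pp : ℝ) (u v : ℕ →₀ ℂ) {s : Finset ℕ} (hs : u.support ⊆ s) :
    form pp u v = ∑ r ∈ s, (starRingEnd ℂ) (u r) * v r * weight pp r := by
  rw [form, Finsupp.sum]
  refine (Finset.sum_subset hs fun r _ hr => ?_).trans (Finset.sum_congr rfl fun r _ => ?_)
  · simp [Finsupp.notMem_support_iff.mp hr]
  · push_cast [weight]
    ring

lemma form_conj_symm (pp : ℝ) (u v : ℕ →₀ ℂ) :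
    form pp u v = (starRingEnd ℂ) (form pp v u) := by
  rw [form_eq_sum pp u v Finset.subset_union_left,
    form_eq_sum pp v u (Finset.subset_union_right (s₁ := u.support)), map_sum]
  refine Finset.sum_congr rfl fun r _ => ?_
  simp only [map_mul, Complex.conj_conj, Complex.conj_ofReal]
  ring

lemma form_add_left (pp : ℝ) (u u' v : ℕ →₀ ℂ) :
    form pp (u + u') v = form pp u v + form pp u' v := by
  unfold form
  apply Finsupp.sum_add_index' <;> intros <;> simp [add_mul]

lemma form_smul_left (pp : ℝ) (a : ℂ) (u v : ℕ →₀ ℂ) :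
    form pp (a • u) v = (starRingEnd ℂ) a * form pp u v := by
  unfold form
  rw [Finsupp.sum_smul_index (by simp), Finsupp.mul_sum]
  exact Finsupp.sum_congr fun r _ => by simp only [map_mul]; ring

lemma form_add_right (pp : ℝ) (u v v' : ℕ →₀ ℂ) :
    form pp u (v + v') = form pp u v + form pp u v' := by
  rw [form_conj_symm, form_add_left, map_add, ← form_conj_symm, ← form_conj_symm]

lemma form_smul_right (pp : ℝ) (a : ℂ) (u v : ℕ →₀ ℂ) :
    form pp u (a • v) = a * form pp u v := by
  rw [form_conj_symm, form_smul_left, map_mul, Complex.conj_conj, ← form_conj_symm]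

noncomputable def formₛₗ (pp : ℝ) : (ℕ →₀ ℂ) →ₗ⋆[ℂ] (ℕ →₀ ℂ) →ₗ[ℂ] ℂ :=
  LinearMap.mk₂'ₛₗ (starRingEnd ℂ) (RingHom.id ℂ) (form pp) (form_add_left pp)
    (form_smul_left pp) (form_add_right pp) (form_smul_right pp)

open ComplexOrder in
lemma form_self_pos {pp : ℝ} (hpp : 0 < pp) {u : ℕ →₀ ℂ} (hu : u ≠ 0) : 0 < form pp u u := by
  rw [form_eq_sum pp u u subset_rfl]
  refine Finset.sum_pos (fun r hr => ?_) (Finsupp.support_nonempty_iff.mpr hu)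
  rw [mul_comm (starRingEnd ℂ _), Complex.mul_conj, ← Complex.ofReal_mul, Complex.zero_lt_real]
  exact mul_pos (Complex.normSq_pos.mpr (Finsupp.mem_support_iff.mp hr)) (weight_pos hpp r)

lemma form_ket_left (pp : ℝ) (r : ℕ) (v : ℕ →₀ ℂ) :
    form pp (ket r) v = v r * weight pp r := by
  rw [form_eq_sum pp (ket r) v (s := {r}) Finsupp.support_single_subset]
  simp [ket]

lemma opOf_ket (g : ℕ → (ℕ →₀ ℂ)) (r : ℕ) : opOf g (ket r) = g r := by
  simp [opOf, ket]

lemma form_map_left_eq_neg_of_ket (pp : ℝ) (A B : (ℕ →₀ ℂ) →ₗ[ℂ] (ℕ →₀ ℂ))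
    (h : ∀ r s, form pp (A (ket r)) (ket s) = -form pp (ket r) (B (ket s))) (u v : ℕ →₀ ℂ) :
    form pp (A u) v = -form pp u (B v) := by
  have : (formₛₗ pp).comp A = -(formₛₗ pp).compl₂ B :=
    LinearMap.ext_basis Finsupp.basisSingleOne Finsupp.basisSingleOne fun r s => by
      simpa [formₛₗ, ket] using h r s
  simpa [formₛₗ] using LinearMap.congr_fun₂ this u v

lemma form_map_left_eq_neg_symm {pp : ℝ} {A B : (ℕ →₀ ℂ) → (ℕ →₀ ℂ)}
    (h : ∀ u v, form pp (A u) v = -form pp u (B v)) (u v : ℕ →₀ ℂ) :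
    form pp (B u) v = -form pp u (A v) := by
  rw [form_conj_symm pp (B u), form_conj_symm pp u (A v), ← map_neg, h, neg_neg]

lemma form_diagonal_skew (pp : ℝ) {c : ℕ → ℂ} (hc : ∀ r, (starRingEnd ℂ) (c r) = -c r)
    (u v : ℕ →₀ ℂ) :
    form pp (opOf (fun r => c r • ket r) u) v = -form pp u (opOf (fun r => c r • ket r) v) := by
  refine form_map_left_eq_neg_of_ket pp _ _ (fun r s => ?_) u v
  rw [opOf_ket, opOf_ket, form_smul_left, form_ket_left, form_ket_left, Finsupp.smul_apply,
    smul_eq_mul, hc]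
  by_cases hrs : s = r
  · subst hrs
    ring
  · simp [ket, hrs]

lemma form_rhoJplus_ket (pp : ℝ) (r s : ℕ) :
    form pp (rhoJplus pp (ket r)) (ket s) = -form pp (ket r) (rhoJminus (ket s)) := by
  rw [rhoJplus, rhoJminus, opOf_ket, opOf_ket, form_smul_left, form_smul_right,
    form_ket_left, form_ket_left]
  rcases r with _ | t
  · simp [ket]
  · by_cases hst : s = t
    · subst hst
      simp only [ket, Nat.add_sub_cancel, Finsupp.single_eq_same, weight_succ, map_mul,
        map_ofNat, Complex.conj_I, Complex.conj_ofReal, map_natCast]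
      push_cast
      ring
    · simp [ket, hst]

open ComplexOrder in
/-- For `p⁺ > 0`, the form `⟨|r⟩, |s⟩⟩ = (2p⁺)^r r! δ_{r,s}` is a positive definite
Hermitian inner product on `V₊^{p⁺,p⁻}`, sesquilinear, and contravariant:
`⟨ρ(J⁺)u, v⟩ = −⟨u, ρ(J⁻)v⟩`, `⟨ρ(J⁻)u, v⟩ = −⟨u, ρ(J⁺)v⟩`,
`⟨ρ(J)u, v⟩ = −⟨u, ρ(J)v⟩`, `⟨ρ(T)u, v⟩ = −⟨u, ρ(T)v⟩`;
i.e. `V₊^{p⁺,p⁻}` is a unitary representation of 𝔫𝔴. -/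
theorem Vplus_unitary (pp pm : ℝ) (hpp : 0 < pp) :
    (∀ u v : ℕ →₀ ℂ, form pp u v = (starRingEnd ℂ) (form pp v u)) ∧
    (∀ (a : ℂ) (u u' v : ℕ →₀ ℂ),
      form pp (a • u + u') v = (starRingEnd ℂ) a * form pp u v + form pp u' v) ∧
    (∀ (a : ℂ) (u v v' : ℕ →₀ ℂ),
      form pp u (a • v + v') = a * form pp u v + form pp u v') ∧
    (∀ u : ℕ →₀ ℂ, u ≠ 0 → 0 < form pp u u) ∧
    (∀ u v : ℕ →₀ ℂ, form pp (rhoJplus pp u) v = -form pp u (rhoJminus v)) ∧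
    (∀ u v : ℕ →₀ ℂ, form pp (rhoJminus u) v = -form pp u (rhoJplus pp v)) ∧
    (∀ u v : ℕ →₀ ℂ, form pp (rhoJ pm u) v = -form pp u (rhoJ pm v)) ∧
    (∀ u v : ℕ →₀ ℂ, form pp (rhoT pp u) v = -form pp u (rhoT pp v)) := by
  have hJplus := form_map_left_eq_neg_of_ket pp _ _ (form_rhoJplus_ket pp)
  refine ⟨form_conj_symm pp, fun a u u' v => ?_, fun a u v v' => ?_,
    fun u => form_self_pos hpp, hJplus, form_map_left_eq_neg_symm hJplus,
    form_diagonal_skew pp fun r => ?_, form_diagonal_skew pp fun r => ?_⟩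
  · rw [form_add_left, form_smul_left]
  · rw [form_add_right, form_smul_right]
  · simp only [map_mul, map_sub, Complex.conj_I, Complex.conj_ofReal, map_natCast]
    ring
  · simp only [map_mul, Complex.conj_I, Complex.conj_ofReal]
    ring
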